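/- Let G be a connected non-complete 2K2-free simple graph, let S be a minimal vertex separator of G, and suppose G1 is a non-trivial connected component of G − S. Then every edge {u,v} of G1 is universal to S, i.e., every vertex x ∈ S is adjacent in G to u or to v. -/

import Mathlib

open SimpleGraph

/-- A simple graph is `2K₂`-free: there are no four pairwise distinct vertices `a b c d`
with `ab` and `cd` edges and none of `ac, ad, bc, bd` an edge. -/
def TwoK2Free {V : Type*} (G : SimpleGraph V) : Prop :=
  ¬ ∃ a b c d : V, a ≠ b ∧ a ≠ c ∧ a ≠ d ∧ b ≠ c ∧ b ≠ d ∧ c ≠ d ∧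
    G.Adj a b ∧ G.Adj c d ∧ ¬ G.Adj a c ∧ ¬ G.Adj a d ∧ ¬ G.Adj b c ∧ ¬ G.Adj b d

/-- `S ⊊ V(G)` is a vertex separator: deleting `S` leaves a disconnected graph. -/
def IsSeparator {V : Type*} (G : SimpleGraph V) (S : Set V) : Prop :=
  S ≠ Set.univ ∧ ¬ (G.induce (Sᶜ : Set V)).Connected

/-- A minimal vertex separator: no proper subset is a separator. -/
def IsMinSeparator {V : Type*} (G : SimpleGraph V) (S : Set V) : Prop :=
  IsSeparator G S ∧ ∀ S' : Set V, S' ⊂ S → ¬ IsSeparator G S'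

/-- A connected component is trivial if its support is a single vertex. -/
def IsTrivialComp {α : Type*} {H : SimpleGraph α} (C : H.ConnectedComponent) : Prop :=
  ∃ v, C.supp = {v}

/-
Since `S \ {x}` is not a separator, a path from any component of `G − S` to `x` avoiding
`S \ {x}` shows that `x` has a neighbour `y` in every component of `G − S`, in particular in a
component other than the one containing the edge `uv`. Then `uv` and `xy` are edges with no
edge between `y` and `{u, v}`, so `2K₂`-freeness forces `x` to be adjacent to `u` or `v`.
-/

theorem TwoK2Free.adj_of_adj_of_adj {V : Type*} {G : SimpleGraph V} (h : TwoK2Free G)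
    {a b c d : V} (hab : G.Adj a b) (hcd : G.Adj c d) :
    G.Adj a c ∨ G.Adj a d ∨ G.Adj b c ∨ G.Adj b d := by
  by_contra! hno
  obtain ⟨hac, had, hbc, hbd⟩ := hno
  -- the four vertices are distinct because `ab` and `cd` are edges while the cross pairs are not
  refine h ⟨a, b, c, d, hab.ne, ?_, ?_, ?_, ?_, hcd.ne, hab, hcd, hac, had, hbc, hbd⟩
  · rintro rfl; exact had hcd
  · rintro rfl; exact hac hcd.symm
  · rintro rfl; exact hbd hcd
  · rintro rfl; exact hbc hcd.symm

theorem SimpleGraph.ConnectedComponent.exists_ne_of_not_connected {V : Type*}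
    {H : SimpleGraph V} (hH : ¬ H.Connected) (C : H.ConnectedComponent) :
    ∃ C' : H.ConnectedComponent, C' ≠ C := by
  by_contra! hall
  obtain ⟨c, -⟩ := C.exists_rep
  have : Nonempty V := ⟨c⟩
  exact hH ⟨fun a b => ConnectedComponent.exact ((hall _).trans (hall _).symm)⟩

theorem SimpleGraph.ConnectedComponent.exists_adj_of_preconnected_induce_diff_singleton
    {V : Type*} {G : SimpleGraph V} {S : Set V} {x : V} (hx : x ∈ S)
    (hpre : (G.induce (S \ {x})ᶜ).Preconnected) (C : (G.induce Sᶜ).ConnectedComponent) :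
    ∃ y ∈ C.supp, G.Adj x y := by
  obtain ⟨c, rfl⟩ := C.exists_rep
  -- follow a path from `c` to `x` avoiding `S \ {x}`; it leaves the component of `c` only at `x`
  let inC : Set ↥(S \ {x})ᶜ :=
    {z | ∃ hz : (z : V) ∈ Sᶜ, (G.induce Sᶜ).Reachable c ⟨z, hz⟩}
  obtain ⟨p⟩ := hpre ⟨c, fun h => c.2 h.1⟩ ⟨x, fun h => h.2 rfl⟩
  obtain ⟨d, -, ⟨hfst, hreach⟩, hsnd⟩ :=
    p.exists_boundary_dart inC ⟨c.2, .rfl⟩ fun ⟨hxS, _⟩ => hxS hx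
  have hadj : G.Adj d.fst d.snd := d.adj
  by_cases hdx : (d.snd : V) = x
  · exact ⟨⟨d.fst, hfst⟩, ConnectedComponent.sound hreach.symm, (hdx ▸ hadj).symm⟩
  · have hdS : (d.snd : V) ∈ Sᶜ := fun h => d.snd.2 ⟨h, hdx⟩
    exact absurd ⟨hdS, hreach.trans (Adj.reachable (G := G.induce Sᶜ) hadj)⟩ hsnd

theorem IsMinSeparator.preconnected_induce_diff_singleton {V : Type*} {G : SimpleGraph V}
    {S : Set V} (hS : IsMinSeparator G S) {x : V} (hx : x ∈ S) :
    (G.induce (S \ {x})ᶜ).Preconnected := by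
  by_contra hpre
  refine hS.2 (S \ {x}) (Set.sdiff_singleton_ssubset.mpr hx) ⟨?_, fun h => hpre h.preconnected⟩
  intro huniv
  exact (huniv ▸ Set.mem_univ x : x ∈ S \ {x}).2 rfl

theorem IsMinSeparator.exists_adj_mem_supp {V : Type*} {G : SimpleGraph V} {S : Set V}
    (hS : IsMinSeparator G S) {x : V} (hx : x ∈ S) (C : (G.induce Sᶜ).ConnectedComponent) :
    ∃ y ∈ C.supp, G.Adj x y :=
  C.exists_adj_of_preconnected_induce_diff_singleton hx (hS.preconnected_induce_diff_singleton hx)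

theorem edge_universal_to_separator {V : Type*} (G : SimpleGraph V)
    (h2k2 : TwoK2Free G) (S : Set V) (hS : IsMinSeparator G S)
    (G1 : (G.induce (Sᶜ : Set V)).ConnectedComponent) :
    ∀ u v : (Sᶜ : Set V), u ∈ G1.supp → v ∈ G1.supp →
      (G.induce (Sᶜ : Set V)).Adj u v →
      ∀ x ∈ S, G.Adj (u : V) x ∨ G.Adj (v : V) x := by
  intro u v hu hv huv x hx
  obtain ⟨C, hC⟩ := G1.exists_ne_of_not_connected hS.1.2
  obtain ⟨y, hyC, hxy⟩ := hS.exists_adj_mem_supp hx C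
  have hnot_adj : ∀ w ∈ G1.supp, ¬ G.Adj (w : V) y := fun w hw hwy =>
    hC (ConnectedComponent.eq_of_common_vertex hyC (G1.mem_supp_of_adj_mem_supp hw hwy))
  rcases h2k2.adj_of_adj_of_adj huv hxy with hux | huy | hvx | hvy
  · exact .inl hux
  · exact absurd huy (hnot_adj u hu)
  · exact .inr hvx
  · exact absurd hvy (hnot_adj v hv)
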